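/- Let T = τμ be a k-current with finite mass on an open set Ω ⊆ ℝⁿ and let D be a k-distribution of class C⁰ on Ω. Then there exists a Borel set N ⊆ Ω with μ(N) = 0 such that every point of Γ(τ, D)^{|τ|μ, 0} ∖ N belongs to Γ(τ, D); that is, every 0-superdensity point of the tangency set Γ(τ, D) with respect to the measure |τ|μ, outside the μ-null set N, lies in Γ(τ, D). -/

import Mathlib

open MeasureTheory Metric Filter ENNReal Topology

noncomputable section

/-- Euclidean `n`-space. -/
abbrev Euc (n : ℕ) := EuclideanSpace ℝ (Fin n)

/-- Coordinates of an element of the exterior algebra of `ℝⁿ` with respect to the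
standard basis `{e_s : s ⊆ {1,…,n}}`.  The degree-`k` part corresponds to the
coefficients indexed by sets of cardinality `k`, i.e. to `Λ_k(ℝⁿ)` (resp. `Λ^k(ℝⁿ)`). -/
abbrev MV (n : ℕ) := Finset (Fin n) → ℝ

namespace MV

variable {n : ℕ}

/-- `v` belongs to `Λ_k(ℝⁿ)` (equivalently `Λ^k(ℝⁿ)`): only coefficients of degree `k`
are nonzero. -/
def IsGrade (k : ℕ) (v : MV n) : Prop := ∀ s : Finset (Fin n), s.card ≠ k → v s = 0

/-- The duality pairing `⟨ζ; α⟩ := Σ_i ζ_i α_i`. -/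
def pair (v w : MV n) : ℝ := ∑ s : Finset (Fin n), v s * w s

/-- The sign `(-1)^{#{(a,b) ∈ s × t : b < a}}` showing up in the wedge product of basis
elements: `e_s ∧ e_t = sign s t • e_{s ∪ t}` for disjoint `s`, `t`. -/
def sign (s t : Finset (Fin n)) : ℝ :=
  (-1 : ℝ) ^ ((s ×ˢ t).filter fun p => p.2 < p.1).card

/-- The wedge product, in coordinates. -/
def wedge (v w : MV n) : MV n :=
  fun u => ∑ s ∈ u.powerset, sign s (u \ s) * v s * w (u \ s)

/-- The basis multivector `e_t` (resp. basis covector `dx_t`). -/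
def delta (t : Finset (Fin n)) : MV n := fun s => if s = t then 1 else 0

/-- Interior multiplication `ζ ⌟ α`, characterized by `⟨ζ ⌟ α; β⟩ = ⟨ζ; α ∧ β⟩`. -/
def imul (v a : MV n) : MV n := fun t => pair v (wedge a (delta t))

/-- The canonical embedding `ℝⁿ = Λ_1(ℝⁿ) ↪ Λ_•(ℝⁿ)`. -/
def embed (x : Euc n) : MV n := fun s => ∑ i : Fin n, if s = {i} then x i else 0

/-- The canonical identification of the degree-one part of `Λ_•(ℝⁿ)` with `ℝⁿ`. -/
def toVec (v : MV n) : Euc n := WithLp.toLp 2 fun i => v {i}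

/-- The wedge product `w 0 ∧ w 1 ∧ ⋯ ∧ w (k-1)` of a family of vectors of `ℝⁿ`. -/
def wedgeFam {k : ℕ} (w : Fin k → Euc n) : MV n :=
  (List.ofFn fun i => embed (w i)).foldr wedge (delta ∅)

/-- A `k`-vector is simple if it is a wedge product of `k` vectors of `ℝⁿ`. -/
def IsSimple (k : ℕ) (v : MV n) : Prop := ∃ w : Fin k → Euc n, v = wedgeFam w

/-- `span(v) := {v ⌟ α : α ∈ Λ^{k-1}(ℝⁿ)} ⊆ ℝⁿ`, for `v ∈ Λ_k(ℝⁿ)`. -/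
def spanSet (k : ℕ) (v : MV n) : Set (Euc n) :=
  {u | ∃ a : MV n, IsGrade (k - 1) a ∧ u = toVec (imul v a)}

/-- The (Euclidean) norm of a multivector. -/
def norm' (v : MV n) : ℝ := Real.sqrt (∑ s : Finset (Fin n), v s ^ 2)

/-- The exterior derivative of a (multi)covector field, in coordinates:
`(dψ)_u(x) = Σ_{i ∈ u} sign({i}, u \ {i}) ∂_i ψ_{u \ {i}}(x)`. -/
def extDeriv (ψ : Euc n → MV n) (x : Euc n) : MV n :=
  fun u => ∑ i ∈ u, sign {i} (u \ {i}) * fderiv ℝ ψ x (EuclideanSpace.single i 1) (u \ {i})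

end MV

/-- `x` is an `h`-superdensity point of `E` with respect to `λ`, i.e.
`λ(B_r(x) ∖ E) = λ(B_r(x))·o(r^h)` as `r → 0+`. -/
def SuperdensityPt {n : ℕ} (lam : Measure (Euc n)) (h : ℝ) (E : Set (Euc n)) (x : Euc n) :
    Prop :=
  ∀ ε > (0 : ℝ), ∃ r₀ > (0 : ℝ), ∀ r : ℝ, 0 < r → r < r₀ →
    lam (ball x r \ E) ≤ ENNReal.ofReal (ε * r ^ h) * lam (ball x r)

/-- The upper `s`-density `Θ^{*s}(μ, x) := limsup_{r→0+} μ(B_r(x))/(2r)^s`. -/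
def upperDensity {n : ℕ} (μ : Measure (Euc n)) (s : ℝ) (x : Euc n) : ℝ≥0∞ :=
  Filter.limsup (fun r : ℝ => μ (ball x r) / ENNReal.ofReal ((2 * r) ^ s)) (𝓝[>] 0)

/-- The lower `s`-density `Θ^s_*(μ, x) := liminf_{r→0+} μ(B_r(x))/(2r)^s`. -/
def lowerDensity {n : ℕ} (μ : Measure (Euc n)) (s : ℝ) (x : Euc n) : ℝ≥0∞ :=
  Filter.liminf (fun r : ℝ => μ (ball x r) / ENNReal.ofReal ((2 * r) ^ s)) (𝓝[>] 0)

/-- The upper derivative `D̄(λ, μ, x) := limsup_{r→0+} λ(B_r(x))/μ(B_r(x))`. -/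
def upperDeriv {n : ℕ} (lam μ : Measure (Euc n)) (x : Euc n) : ℝ≥0∞ :=
  Filter.limsup (fun r : ℝ => lam (ball x r) / μ (ball x r)) (𝓝[>] 0)

/-- The total variation `|τμ| = |τ|μ` of the current `T = τμ`. -/
def totalVar {n : ℕ} (τ : Euc n → MV n) (μ : Measure (Euc n)) : Measure (Euc n) :=
  μ.withDensity fun x => ENNReal.ofReal (MV.norm' (τ x))

/-- The Lebesgue-point conditions (3.2): the `μ`-averages of `τ` and of `|τ|` on `B_r(x)`
converge to `τ(x)` and `|τ(x)|` respectively, as `r → 0+`. -/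
def LebesguePt {n : ℕ} (μ : Measure (Euc n)) (τ : Euc n → MV n) (x : Euc n) : Prop :=
  Tendsto (fun r : ℝ => (μ (ball x r)).toReal⁻¹ • ∫ y in ball x r, τ y ∂μ)
    (𝓝[>] 0) (𝓝 (τ x)) ∧
  Tendsto (fun r : ℝ => (∫ y in ball x r, MV.norm' (τ y) ∂μ) / (μ (ball x r)).toReal)
    (𝓝[>] 0) (𝓝 (MV.norm' (τ x)))

/-- `K(τ, ω) := {y ∈ U : ⟨τ(y) ⌟ α; ω_y⟩ = 0 for all α ∈ Λ^{h-l}(ℝⁿ)}`, where `τ` is an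
`h`-vectorfield and `ω` a differential `l`-form on `U`. -/
def Kset {n : ℕ} (h l : ℕ) (U : Set (Euc n)) (τ : Euc n → MV n) (ω : Euc n → MV n) :
    Set (Euc n) :=
  {y ∈ U | ∀ a : MV n, MV.IsGrade (h - l) a → MV.pair (MV.imul (τ y) a) (ω y) = 0}

/-- `T = τμ` is a normal `h`-current on `Ω` with `∂T = τ'μ'` : both measures are finite,
`τ, τ'` are Borel and integrable, take values in `Λ_h` resp. `Λ_{h-1}`, and
`∫ ⟨τ'; ψ⟩ dμ' = ∫ ⟨τ; dψ⟩ dμ` for every smooth compactly supported `(h-1)`-form `ψ` on `Ω`. -/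
def IsNormalPair {n : ℕ} (h : ℕ) (Ω : Set (Euc n)) (μ μ' : Measure (Euc n))
    (τ τ' : Euc n → MV n) : Prop :=
  IsFiniteMeasure μ ∧ IsFiniteMeasure μ' ∧
  Measurable τ ∧ Measurable τ' ∧
  Integrable τ μ ∧ Integrable τ' μ' ∧
  (∀ x, MV.IsGrade h (τ x)) ∧ (∀ x, MV.IsGrade (h - 1) (τ' x)) ∧
  ∀ ψ : Euc n → MV n, ContDiff ℝ (⊤ : ℕ∞) ψ → HasCompactSupport ψ → tsupport ψ ⊆ Ω →
    (∀ y, MV.IsGrade (h - 1) (ψ y)) →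
    ∫ y, MV.pair (τ' y) (ψ y) ∂μ' = ∫ y, MV.pair (τ y) (MV.extDeriv ψ y) ∂μ

/-- `D` is a `k`-distribution of class `C^p` on `Ω`: each `D(x)` is a `k`-dimensional
subspace and, locally, `D` is the intersection of the kernels of `n - k` differential
1-forms of class `C^p` (the defining forms). -/
def IsDistribution {n : ℕ} (p : ℕ∞) (k : ℕ) (Ω : Set (Euc n))
    (D : Euc n → Submodule ℝ (Euc n)) : Prop :=
  (∀ x ∈ Ω, Module.finrank ℝ (D x) = k) ∧
  ∀ x ∈ Ω, ∃ U : Set (Euc n), U ⊆ Ω ∧ IsOpen U ∧ x ∈ U ∧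
    ∃ ω : Fin (n - k) → Euc n → (Euc n →L[ℝ] ℝ),
      (∀ j, ContDiffOn ℝ p (ω j) U) ∧
      ∀ y ∈ U, D y = ⨅ j, LinearMap.ker (ω j y : Euc n →ₗ[ℝ] ℝ)

/-- The tangency set `Γ(τ, D) := {x ∈ Ω : span(τ(x)) ⊆ D(x)}` of a `k`-vectorfield `τ`
with respect to a distribution `D`. -/
def tangencySet {n : ℕ} (k : ℕ) (Ω : Set (Euc n)) (τ : Euc n → MV n)
    (D : Euc n → Submodule ℝ (Euc n)) : Set (Euc n) :=
  {x ∈ Ω | MV.spanSet k (τ x) ⊆ (D x : Set (Euc n))}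

/-- A `C¹` `k`-distribution `D` is involutive at `x`: for some family of `C¹` defining
forms `ω⁽¹⁾, …, ω⁽ⁿ⁻ᵏ⁾` near `x`, each `(dω⁽ʲ⁾)_x` vanishes on `D(x) × D(x)`;
here `(dω)_x(u, v) = (Dω_x u)(v) − (Dω_x v)(u)`. -/
def InvolutiveAt {n : ℕ} (k : ℕ) (Ω : Set (Euc n)) (D : Euc n → Submodule ℝ (Euc n))
    (x : Euc n) : Prop :=
  ∃ U : Set (Euc n), U ⊆ Ω ∧ IsOpen U ∧ x ∈ U ∧
    ∃ ω : Fin (n - k) → Euc n → (Euc n →L[ℝ] ℝ),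
      (∀ j, ContDiffOn ℝ 1 (ω j) U) ∧
      (∀ y ∈ U, D y = ⨅ j, LinearMap.ker (ω j y : Euc n →ₗ[ℝ] ℝ)) ∧
      ∀ j, ∀ u ∈ D x, ∀ v ∈ D x, fderiv ℝ (ω j) x u v = fderiv ℝ (ω j) x v u

/-! By the Besicovitch–Lebesgue differentiation theorem, for `μ`-a.e. `x` the averages over
`closedBall x r` of `|τ|` and of `|τ| 𝟙_{Γᶜ}` tend to `|τ(x)|` and `|τ(x)| 𝟙_{Γᶜ}(x)` as `r → 0+`
(`Γ` need not be measurable, so `Γᶜ` is replaced by a measurable hull for `|τ|μ`). At a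
0-superdensity point of `Γ` the second average is eventually at most `ε` times the first, so
`|τ(x)| = 0` unless `x ∈ Γ`; and `τ(x) = 0` puts `x ∈ Ω` into `Γ` since `span(0) = {0}`. -/

theorem Besicovitch.ae_tendsto_setLIntegral_closedBall_div {α : Type*} [MetricSpace α]
    [MeasurableSpace α] [BorelSpace α] [SecondCountableTopology α] [HasBesicovitchCovering α]
    {μ : Measure α} [IsLocallyFiniteMeasure μ] {f : α → ℝ≥0∞}
    (hf : AEMeasurable f μ) (h'f : ∫⁻ y, f y ∂μ ≠ ∞) :
    ∀ᵐ x ∂μ, Tendsto (fun r => (∫⁻ y in closedBall x r, f y ∂μ) / μ (closedBall x r))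
      (𝓝[>] 0) (𝓝 (f x)) := by
  filter_upwards [(Besicovitch.vitaliFamily μ).ae_tendsto_lintegral_div hf h'f] with x hx
  exact hx.comp (Besicovitch.tendsto_filterAt μ x)

theorem SuperdensityPt.eventually_closedBall {n : ℕ} {lam : Measure (Euc n)}
    [IsFiniteMeasure lam] {E : Set (Euc n)} {x : Euc n} (hx : SuperdensityPt lam 0 E x)
    {ε : ℝ} (hε : 0 < ε) :
    ∀ᶠ r in 𝓝[>] 0, lam (closedBall x r \ E) ≤ ENNReal.ofReal ε * lam (closedBall x r) := by
  obtain ⟨r₀, hr₀, hopen⟩ := hx ε hε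
  filter_upwards [Ioo_mem_nhdsGT hr₀] with r hr
  have hlim : Tendsto (fun r' => ENNReal.ofReal ε * lam (ball x r')) (𝓝[>] r)
      (𝓝 (ENNReal.ofReal ε * lam (closedBall x r))) := by
    rw [← biInter_gt_ball x r]
    refine ENNReal.Tendsto.const_mul (tendsto_measure_biInter_gt
      (fun _ _ => measurableSet_ball.nullMeasurableSet)
      (fun _ _ _ h => ball_subset_ball h) ⟨r + 1, by linarith, measure_ne_top _ _⟩)
      (Or.inr ofReal_ne_top)
  refine ge_of_tendsto hlim ?_
  filter_upwards [Ioo_mem_nhdsGT hr.2] with r' hr'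
  calc lam (closedBall x r \ E) ≤ lam (ball x r' \ E) :=
        measure_mono (Set.sdiff_subset_sdiff_left (closedBall_subset_ball hr'.1))
    _ ≤ ENNReal.ofReal (ε * r' ^ (0 : ℝ)) * lam (ball x r') :=
        hopen r' (hr.1.trans hr'.1) hr'.2
    _ = ENNReal.ofReal ε * lam (ball x r') := by rw [Real.rpow_zero, mul_one]

theorem ae_mem_or_eq_zero_of_superdensityPt {n : ℕ} {μ : Measure (Euc n)}
    [IsLocallyFiniteMeasure μ]
    {f : Euc n → ℝ≥0∞} (hf : AEMeasurable f μ) (h'f : ∫⁻ y, f y ∂μ ≠ ∞) (E : Set (Euc n)) :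
    ∀ᵐ x ∂μ, SuperdensityPt (μ.withDensity f) 0 E x → x ∈ E ∨ f x = 0 := by
  set lam := μ.withDensity f
  have : IsFiniteMeasure lam := isFiniteMeasure_withDensity h'f
  set T := toMeasurable lam Eᶜ
  have hT : MeasurableSet T := measurableSet_toMeasurable _ _
  have hint_indicator :
      ∀ x r, ∫⁻ y in closedBall x r, T.indicator f y ∂μ = lam (closedBall x r \ E) := by
    intro x r
    rw [← withDensity_apply _ measurableSet_closedBall, withDensity_indicator hT,
      ← restrict_withDensity hT, Measure.restrict_apply measurableSet_closedBall, Set.inter_comm,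
      Measure.measure_toMeasurable_inter_of_sFinite measurableSet_closedBall, Set.sdiff_eq,
      Set.inter_comm]
  have hint : ∀ x r, ∫⁻ y in closedBall x r, f y ∂μ = lam (closedBall x r) := fun x r =>
    (withDensity_apply _ measurableSet_closedBall).symm
  filter_upwards [Besicovitch.ae_tendsto_setLIntegral_closedBall_div hf h'f,
    Besicovitch.ae_tendsto_setLIntegral_closedBall_div (hf.indicator hT)
      (ne_top_of_le_ne_top h'f (lintegral_mono (Set.indicator_le_self T f))),
    ae_lt_top' hf h'f] with x hfx hTx hx_top hsd
  by_contra! h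
  rw [Set.indicator_of_mem (subset_toMeasurable lam Eᶜ h.1)] at hTx
  have hhalf : f x ≤ ENNReal.ofReal (1 / 2) * f x := by
    refine le_of_tendsto_of_tendsto hTx (ENNReal.Tendsto.const_mul hfx (Or.inr ofReal_ne_top)) ?_
    filter_upwards [hsd.eventually_closedBall one_half_pos] with r hr
    rw [hint_indicator, hint, ← mul_div_assoc]
    exact ENNReal.div_le_div_right hr _
  have hlt : ENNReal.ofReal (1 / 2) * f x < 1 * f x :=
    ENNReal.mul_lt_mul_left h.2 hx_top.ne (by norm_num)
  exact (one_mul (f x) ▸ hlt).not_ge hhalf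

namespace MV

variable {n : ℕ}

theorem norm'_eq_norm_toLp (v : MV n) : norm' v = ‖WithLp.toLp 2 v‖ := by
  simp [norm', EuclideanSpace.norm_eq, sq_abs]

theorem spanSet_zero_subset (k : ℕ) : spanSet k (0 : MV n) ⊆ {0} := by
  rintro _ ⟨a, -, rfl⟩
  ext i
  simp [toVec, imul, pair]

end MV

theorem MeasureTheory.Integrable.norm' {n : ℕ} {μ : Measure (Euc n)} {τ : Euc n → MV n}
    (hτ : Integrable τ μ) : Integrable (fun x => MV.norm' (τ x)) μ := by
  simpa only [MV.norm'_eq_norm_toLp, ContinuousLinearEquiv.coe_coe,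
    PiLp.coe_symm_continuousLinearEquiv] using
    ((PiLp.continuousLinearEquiv 2 ℝ fun _ : Finset (Fin n) => ℝ).symm.toContinuousLinearMap
      |>.integrable_comp hτ).norm

theorem mem_tangencySet_of_eq_zero {n k : ℕ} {Ω : Set (Euc n)} {τ : Euc n → MV n}
    {D : Euc n → Submodule ℝ (Euc n)} {x : Euc n} (hx : x ∈ Ω) (hτx : τ x = 0) :
    x ∈ tangencySet k Ω τ D :=
  ⟨hx, hτx ▸ (MV.spanSet_zero_subset k).trans (Set.singleton_subset_iff.2 (D x).zero_mem)⟩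

theorem statement9_general {n k : ℕ}
    (Ω : Set (Euc n))
    (μ : Measure (Euc n)) [IsFiniteMeasure μ]
    (τ : Euc n → MV n) (hτi : Integrable τ μ)
    (D : Euc n → Submodule ℝ (Euc n)) :
    ∃ N : Set (Euc n), MeasurableSet N ∧ μ N = 0 ∧
      ∀ x ∈ Ω, SuperdensityPt (totalVar τ μ) 0 (tangencySet k Ω τ D) x → x ∉ N →
        x ∈ tangencySet k Ω τ D := by
  have hgood := ae_mem_or_eq_zero_of_superdensityPt hτi.norm'.aemeasurable.ennreal_ofReal
    hτi.norm'.lintegral_lt_top.ne (tangencySet k Ω τ D)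
  refine ⟨toMeasurable μ _, measurableSet_toMeasurable _ _,
    (measure_toMeasurable _).trans (ae_iff.1 hgood), fun x hxΩ hsd hxN => ?_⟩
  have hx := not_not.1 fun h => hxN (subset_toMeasurable _ _ h)
  rcases hx hsd with hΓ | hτx
  · exact hΓ
  · rw [ENNReal.ofReal_eq_zero, MV.norm'_eq_norm_toLp, norm_le_zero_iff,
      WithLp.toLp_eq_zero] at hτx
    exact mem_tangencySet_of_eq_zero hxΩ hτx

/-- **Proposition 4.1.** Let `T = τμ` be a `k`-current with finite mass on `Ω` and `D` a
`k`-distribution of class `C⁰` on `Ω`.  Then there is an `N ⊆ Ω` with `μ(N) = 0` such that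
`Γ(τ,D)^{|τ|μ,0} ∖ N ⊆ Γ(τ,D)`. -/
theorem statement9 {n k : ℕ} (hk : 1 ≤ k) (hkn : k ≤ n)
    (Ω : Set (Euc n)) (hΩ : IsOpen Ω)
    (μ : Measure (Euc n)) [IsFiniteMeasure μ]
    (τ : Euc n → MV n) (hτm : Measurable τ) (hτi : Integrable τ μ)
    (hτg : ∀ x, MV.IsGrade k (τ x))
    (D : Euc n → Submodule ℝ (Euc n)) (hD : IsDistribution 0 k Ω D) :
    ∃ N : Set (Euc n), MeasurableSet N ∧ μ N = 0 ∧
      ∀ x ∈ Ω, SuperdensityPt (totalVar τ μ) 0 (tangencySet k Ω τ D) x → x ∉ N →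
        x ∈ tangencySet k Ω τ D :=
  statement9_general Ω μ τ hτi D
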